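/- arXiv:2203.14927 — 6 statements merged into one kernel-verified Lean document; each statement's English description precedes it below -/
import Mathlib

section
/- Let G be a simple graph on the vertex set Fin n, and for each vertex i let g_i be its mod-2 characteristic vector. Let S be a finite set of vertices, and suppose there exist vertices v ∈ S and w ∉ S with G.Reachable v w. Then the sum Σ_{v ∈ S} g_v is not the zero vector; equivalently, there exists an edge of G with exactly one endpoint in S. -/
/-- The mod-2 characteristic vector of vertex `i` of a simple graph `G` on `Fin n`,
indexed by pairs `(j, k)` of vertices. -/
def charVecMod2 {n : ℕ} (G : SimpleGraph (Fin n)) [DecidableRel G.Adj]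
    (i j k : Fin n) : ZMod 2 :=
  if (i = j ∨ i = k) ∧ G.Adj j k then 1 else 0

private lemma boundary_edge {n : ℕ} (G : SimpleGraph (Fin n)) (S : Finset (Fin n)) :
    ∀ {v w : Fin n}, G.Walk v w → v ∈ S → w ∉ S →
      ∃ a b, G.Adj a b ∧ a ∈ S ∧ b ∉ S := by
  intro v w p
  induction p with
  | nil => intro h h'; exact absurd h h'
  | @cons u x y h p ih =>
    intro hv hw
    by_cases hm : x ∈ S
    · exact ih hm hw
    · exact ⟨_, _, h, hv, hm⟩

private lemma sum_one {n : ℕ} (G : SimpleGraph (Fin n)) [DecidableRel G.Adj]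
    (S : Finset (Fin n)) {a b : Fin n} (hab : G.Adj a b) (ha : a ∈ S) (hb : b ∉ S) :
    (∑ u ∈ S, charVecMod2 G u a b) = 1 := by
  rw [Finset.sum_eq_single_of_mem a ha]
  · simp [charVecMod2, hab]
  · intro u hu hua
    have : u ≠ b := fun h => hb (h ▸ hu)
    simp [charVecMod2, hua, this]

private lemma sum_one' {n : ℕ} (G : SimpleGraph (Fin n)) [DecidableRel G.Adj]
    (S : Finset (Fin n)) {a b : Fin n} (hab : G.Adj a b) (ha : a ∉ S) (hb : b ∈ S) :
    (∑ u ∈ S, charVecMod2 G u a b) = 1 := by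
  rw [Finset.sum_eq_single_of_mem b hb]
  · simp [charVecMod2, hab]
  · intro u hu hub
    have : u ≠ a := fun h => ha (h ▸ hu)
    simp [charVecMod2, hub, this]

theorem charVecMod2_sum_ne_zero_of_reachable {n : ℕ} (G : SimpleGraph (Fin n))
    [DecidableRel G.Adj] (S : Finset (Fin n)) (v w : Fin n)
    (hv : v ∈ S) (hw : w ∉ S) (hreach : G.Reachable v w) :
    (¬ ∀ j k : Fin n, j < k → (∑ u ∈ S, charVecMod2 G u j k) = 0) ∧
      (∃ j k : Fin n, G.Adj j k ∧ Xor' (j ∈ S) (k ∈ S)) := by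
  obtain ⟨a, b, hab, ha, hb⟩ := boundary_edge G S hreach.some hv hw
  constructor
  · intro hall
    rcases lt_or_gt_of_ne (G.ne_of_adj hab) with h | h
    · have := hall a b h
      rw [sum_one G S hab ha hb] at this
      exact one_ne_zero this
    · have := hall b a h
      rw [sum_one' G S hab.symm hb ha] at this
      exact one_ne_zero this
  · exact ⟨a, b, hab, Or.inl ⟨ha, hb⟩⟩
end

section
/- Let M be an additive commutative monoid in which every element x satisfies x + x = 0, let ι be a decidable-equality type, and let f : ι → M. Then for every list l of elements of ι, the sum of f over the list, (l.map f).sum, equals the sum Σ_{e} f(e) taken over those elements e of l whose number of occurrences in l is odd, i.e., over the finite set l.toFinset.filter (fun e => Odd (l.count e)). -/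
theorem list_sum_eq_sum_odd_count {M : Type*} [AddCommMonoid M]
    (hM : ∀ x : M, x + x = 0) {ι : Type*} [DecidableEq ι]
    (f : ι → M) (l : List ι) :
    (l.map f).sum = ∑ e ∈ l.toFinset.filter (fun e => Odd (l.count e)), f e := by
  have hsmul : ∀ (n : ℕ) (x : M), n • x = if Odd n then x else 0 := by
    intro n x
    induction n with
    | zero => simp
    | succ k ih =>
      rw [succ_nsmul, ih]
      by_cases hk : Odd k <;> simp [hk, Nat.odd_add_one, hM x]
  rw [Finset.sum_list_map_count, Finset.sum_filter]
  refine Finset.sum_congr rfl fun e _ => ?_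
  rw [hsmul]
end

section
/- Let bin : ι → (Fin m → ZMod 2) and h₂ : (Fin m → ZMod 2) → (Fin r → ZMod 2) be arbitrary functions, and let l be a list of elements of ι. Suppose the set of elements of l that occur an odd number of times in l is exactly the singleton {e}. Then the bucket value α := (l.map bin).sum satisfies α = bin e, the checksum value γ := (l.map (h₂ ∘ bin)).sum satisfies γ = h₂ (bin e), and hence γ = h₂ α; in particular the checksum test γ = h₂ α passes and the recovered value α equals bin e. -/
private lemma nsmul_zmod2 {k : ℕ} (n : ℕ) (v : Fin k → ZMod 2) :
    n • v = if Odd n then v else 0 := by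
  have h2 : (2 : ℕ) • v = 0 := by
    funext i
    have : (2 : ℕ) • v i = 0 := by
      rw [two_smul]
      exact CharTwo.add_self_eq_zero (v i)
    simpa using this
  rcases Nat.even_or_odd n with he | ho
  · obtain ⟨k, hk⟩ := id he
    rw [if_neg (Nat.not_odd_iff_even.mpr he), hk, ← two_mul, mul_comm, mul_smul, h2, smul_zero]
  · obtain ⟨k, hk⟩ := id ho
    rw [if_pos ho, hk, add_smul, one_smul, mul_comm, mul_smul, h2, smul_zero, zero_add]

private lemma key {ι : Type*} [DecidableEq ι] {k : ℕ}
    (f : ι → (Fin k → ZMod 2)) (l : List ι) (e : ι)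
    (hgood : l.toFinset.filter (fun x => Odd (l.count x)) = {e}) :
    (l.map f).sum = f e := by
  rw [Finset.sum_list_map_count]
  calc ∑ x ∈ l.toFinset, l.count x • f x
      = ∑ x ∈ l.toFinset, if Odd (l.count x) then f x else 0 := by
        refine Finset.sum_congr rfl fun x _ => nsmul_zmod2 _ _
    _ = ∑ x ∈ l.toFinset.filter (fun x => Odd (l.count x)), f x :=
        (Finset.sum_filter _ _).symm
    _ = f e := by rw [hgood, Finset.sum_singleton]

theorem good_bucket_recovers {ι : Type*} [DecidableEq ι] {m r : ℕ}
    (bin : ι → (Fin m → ZMod 2)) (h₂ : (Fin m → ZMod 2) → (Fin r → ZMod 2))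
    (l : List ι) (e : ι)
    (hgood : l.toFinset.filter (fun x => Odd (l.count x)) = {e}) :
    (l.map bin).sum = bin e ∧
      (l.map (h₂ ∘ bin)).sum = h₂ (bin e) ∧
      (l.map (h₂ ∘ bin)).sum = h₂ ((l.map bin).sum) := by
  have h1 := key bin l e hgood
  have h2 := key (h₂ ∘ bin) l e hgood
  exact ⟨h1, h2, by rw [h1, h2]; rfl⟩
end

section
/- Let (Ω, μ) be a probability space, let r be a positive natural number, let ι be a type, and let h : ι → Ω → (Fin r → ZMod 2) be a family of random variables that are mutually independent, with each h j uniformly distributed on Fin r → ZMod 2 (each of the 2^r values attained with probability (1/2)^r). Then for every finite set S ⊆ ι and every a ∈ ι with S ≠ {a}, the probability that the checksum collision Σ_{j ∈ S} h j = h a occurs is exactly (1/2)^r: μ {ω | Σ_{j ∈ S} h j ω = h a ω} = (1/2)^r. -/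
open MeasureTheory ProbabilityTheory
open scoped ENNReal

/-!
In characteristic two, `∑_{j ∈ S} h j + h a = ∑_{j ∈ S ∆ {a}} h j`, and `S ∆ {a}` is nonempty
because `S ≠ {a}`. A sum of finitely many (at least one) independent uniform variables on a finite
abelian group `G` is again uniform: the event `∑ h i = v` is the union of the cylinders
`{ω | ∀ i, h i ω = g i}` over the `g` with `∑ g = v`, each cylinder has measure `|G|⁻ⁿ` by
independence, and the number of such `g` does not depend on `v`. The `h i` are not assumed
measurable, so additivity over cylinders is obtained from subadditivity together with the fact
that the measures of all cylinders add up to one.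
-/

open Finset
open scoped symmDiff

namespace ZModModule

variable {ι G : Type*} [DecidableEq ι] [AddCommGroup G] [Module (ZMod 2) G]

lemma sum_add_sum_eq_sum_symmDiff (f : ι → G) (s t : Finset ι) :
    ∑ i ∈ s, f i + ∑ i ∈ t, f i = ∑ i ∈ s ∆ t, f i := by
  rw [← sum_union_inter, symmDiff_eq_sup_sdiff_inf, ← sum_sdiff inter_subset_union, add_assoc,
    add_self, add_zero]
  rfl

end ZModModule

theorem measure_biUnion_finset_eq_sum_of_sum_eq_one {Ω κ : Type*} [MeasurableSpace Ω]
    {μ : Measure Ω} [IsProbabilityMeasure μ] [Fintype κ] {C : κ → Set Ω}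
    (hcover : ⋃ k, C k = Set.univ) (hsum : ∑ k, μ (C k) = 1) (s : Finset κ) :
    μ (⋃ k ∈ s, C k) = ∑ k ∈ s, μ (C k) := by
  classical
  refine le_antisymm (measure_biUnion_finset_le s C) ?_
  have hcompl_ne_top : ∑ k ∈ sᶜ, μ (C k) ≠ ∞ :=
    ne_top_of_le_ne_top ENNReal.one_ne_top (hsum ▸ sum_le_univ_sum_of_nonneg (by simp))
  refine ENNReal.le_of_add_le_add_right hcompl_ne_top ?_
  calc ∑ k ∈ s, μ (C k) + ∑ k ∈ sᶜ, μ (C k) = μ ((⋃ k ∈ s, C k) ∪ ⋃ k ∈ sᶜ, C k) := by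
        rw [sum_add_sum_compl, hsum, ← set_biUnion_union, union_compl]
        simp only [mem_univ, Set.iUnion_true, hcover, measure_univ]
    _ ≤ μ (⋃ k ∈ s, C k) + μ (⋃ k ∈ sᶜ, C k) := measure_union_le _ _
    _ ≤ μ (⋃ k ∈ s, C k) + ∑ k ∈ sᶜ, μ (C k) := by gcongr; exact measure_biUnion_finset_le _ _

lemma card_filter_sum_eq_card_filter_sum {ι G : Type*} [Fintype ι] [DecidableEq ι] [Nonempty ι]
    [AddCommGroup G] [Fintype G] [DecidableEq G] (v w : G) :
    #{g : ι → G | ∑ i, g i = v} = #{g : ι → G | ∑ i, g i = w} := by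
  let sumHom : (ι → G) →+ G := AddMonoidHom.mk' (fun g ↦ ∑ i, g i) fun _ _ ↦ sum_add_distrib
  have hsurj : Function.Surjective sumHom := fun u ↦
    ⟨Pi.single (Classical.arbitrary ι) u, by simp [sumHom]⟩
  exact AddMonoidHom.card_fiber_eq_of_mem_range sumHom (hsurj v) (hsurj w)

namespace ProbabilityTheory

variable {Ω ι G : Type*} [MeasurableSpace Ω] {μ : Measure Ω} [Fintype ι]
  [MeasurableSpace G] [MeasurableSingletonClass G] {h : ι → Ω → G}

lemma iIndepFun.measure_forall_eq (hindep : iIndepFun h μ) (g : ι → G) :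
    μ {ω | ∀ i, h i ω = g i} = ∏ i, μ {ω | h i ω = g i} := by
  refine (congrArg μ ?_).trans <| hindep.meas_iInter (s := fun i ↦ h i ⁻¹' {g i})
    fun i ↦ ⟨{g i}, measurableSet_singleton _, rfl⟩
  ext ω
  simp

variable [IsProbabilityMeasure μ] [DecidableEq ι] [Nonempty ι]
  [AddCommGroup G] [Fintype G] [DecidableEq G]

theorem iIndepFun.measure_sum_eq_inv_card (hindep : iIndepFun h μ)
    (hunif : ∀ i g, μ {ω | h i ω = g} = (Fintype.card G : ℝ≥0∞)⁻¹) (v : G) :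
    μ {ω | ∑ i, h i ω = v} = (Fintype.card G : ℝ≥0∞)⁻¹ := by
  set C : (ι → G) → Set Ω := fun g ↦ {ω | ∀ i, h i ω = g i}
  have hC : ∀ g, μ (C g) = (Fintype.card G : ℝ≥0∞)⁻¹ ^ Fintype.card ι := fun g ↦ by
    simp [C, hindep.measure_forall_eq, hunif]
  have hcover : ⋃ g, C g = Set.univ :=
    Set.eq_univ_of_forall fun ω ↦ Set.mem_iUnion.2 ⟨fun i ↦ h i ω, fun _ ↦ rfl⟩
  have hsum : ∑ g, μ (C g) = 1 := by
    simp only [hC, sum_const, card_univ, Fintype.card_fun, nsmul_eq_mul, Nat.cast_pow, ← mul_pow]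
    rw [ENNReal.mul_inv_cancel (by simp) (by simp), one_pow]
  have hfiber : ∀ w, μ {ω | ∑ i, h i ω = w} = ∑ g with ∑ i, g i = w, μ (C g) := fun w ↦ by
    rw [← measure_biUnion_finset_eq_sum_of_sum_eq_one hcover hsum]
    congr 1
    ext ω
    simp only [Set.mem_ofPred_eq, mem_filter, mem_univ, true_and, Set.mem_iUnion, C]
    exact ⟨fun hω ↦ ⟨_, hω, fun _ ↦ rfl⟩, fun ⟨g, hg, hωg⟩ ↦ by simp_rw [hωg, hg]⟩
  have hconst : ∀ w, μ {ω | ∑ i, h i ω = w} = μ {ω | ∑ i, h i ω = v} := fun w ↦ by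
    simp only [hfiber, hC, sum_const, card_filter_sum_eq_card_filter_sum w v]
  have htotal : ∑ w, μ {ω | ∑ i, h i ω = w} = 1 := by
    simp only [hfiber, sum_fiberwise, hsum]
  rw [sum_congr rfl fun w _ ↦ hconst w, sum_const, card_univ, nsmul_eq_mul, mul_comm] at htotal
  exact ENNReal.eq_inv_of_mul_eq_one_left htotal

end ProbabilityTheory

theorem checksum_collision_prob_general
    {Ω : Type*} [MeasurableSpace Ω] (μ : Measure Ω) [IsProbabilityMeasure μ]
    {r : ℕ} {ι : Type*} (h : ι → Ω → (Fin r → ZMod 2))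
    (hindep : iIndepFun h μ)
    (hunif : ∀ j (v : Fin r → ZMod 2), μ {ω | h j ω = v} = (1 / 2 : ℝ≥0∞) ^ r)
    (S : Finset ι) (a : ι) (hSa : S ≠ {a}) :
    μ {ω | (∑ j ∈ S, h j ω) = h a ω} = (1 / 2 : ℝ≥0∞) ^ r := by
  classical
  have hcard : (1 / 2 : ℝ≥0∞) ^ r = (Fintype.card (Fin r → ZMod 2) : ℝ≥0∞)⁻¹ := by
    simp [ENNReal.inv_pow]
  have hevent : {ω | ∑ j ∈ S, h j ω = h a ω} = {ω | ∑ j : ↥(S ∆ {a}), h j ω = 0} := by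
    ext ω
    rw [Set.mem_ofPred_eq, Set.mem_ofPred_eq, ← sub_eq_zero, ZModModule.sub_eq_add,
      ← sum_singleton (fun j ↦ h j ω) a, ZModModule.sum_add_sum_eq_sum_symmDiff,
      sum_coe_sort (S ∆ {a}) fun j ↦ h j ω]
  have : Nonempty ↥(S ∆ {a}) := (symmDiff_nonempty.2 hSa).to_subtype
  rw [hevent, hcard]
  exact (hindep.precomp Subtype.val_injective).measure_sum_eq_inv_card
    (fun j v ↦ (hunif j v).trans hcard) 0

theorem checksum_collision_prob
    {Ω : Type*} [MeasurableSpace Ω] (μ : Measure Ω) [IsProbabilityMeasure μ]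
    {r : ℕ} (hr : 0 < r) {ι : Type*} (h : ι → Ω → (Fin r → ZMod 2))
    (hindep : iIndepFun h μ)
    (hunif : ∀ j (v : Fin r → ZMod 2), μ {ω | h j ω = v} = (1 / 2 : ℝ≥0∞) ^ r)
    (S : Finset ι) (a : ι) (hSa : S ≠ {a}) :
    μ {ω | (∑ j ∈ S, h j ω) = h a ω} = (1 / 2 : ℝ≥0∞) ^ r :=
  checksum_collision_prob_general μ h hindep hunif S a hSa
end

section
/- Let i be a natural number with i ≥ 2, let k be a natural number with 2^(i−2) ≤ k and k < 2^(i−1), and let p = (1/2)^i as a real number. Then k·p·(1−p)^(k−1) > 1/8. -/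
theorem good_bucket_prob_gt_eighth (i k : ℕ) (hi : 2 ≤ i)
    (hk1 : 2 ^ (i - 2) ≤ k) (hk2 : k < 2 ^ (i - 1)) (p : ℝ) (hp : p = (1 / 2 : ℝ) ^ i) :
    (k : ℝ) * p * (1 - p) ^ (k - 1) > 1 / 8 := by
  obtain ⟨j, rfl⟩ := Nat.exists_eq_add_of_le hi
  simp only [Nat.add_sub_cancel_left, show 2 + j - 1 = j + 1 by omega] at hk1 hk2
  have hk0 : 1 ≤ k := le_trans Nat.one_le_two_pow hk1
  have hp0 : 0 < p := by rw [hp]; positivity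
  have hpj : p = (1 / 4) * (1 / 2 : ℝ) ^ j := by
    rw [hp, pow_add]; ring
  have htwo : ((2 : ℝ) ^ j) * ((1 / 2 : ℝ) ^ j) = 1 := by
    rw [← mul_pow]; norm_num
  have h1 : ((2 : ℝ) ^ j) ≤ (k : ℝ) := by exact_mod_cast hk1
  have h2 : (k : ℝ) < (2 : ℝ) ^ (j + 1) := by exact_mod_cast hk2
  have hkp1 : (1 : ℝ) / 4 ≤ (k : ℝ) * p := by
    calc (1 : ℝ) / 4 = ((2 : ℝ) ^ j) * p := by rw [hpj]; nlinarith [htwo]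
    _ ≤ (k : ℝ) * p := by nlinarith
  have hkp2 : (k : ℝ) * p < 1 / 2 := by
    have : ((2 : ℝ) ^ (j + 1)) * p = 1 / 2 := by
      rw [hpj, pow_succ]; nlinarith [htwo]
    nlinarith
  have hcast : ((k - 1 : ℕ) : ℝ) = (k : ℝ) - 1 := by
    push_cast [hk0]; ring
  have hbern : 1 - ((k : ℝ) - 1) * p ≤ (1 - p) ^ (k - 1) := by
    have := one_add_mul_le_pow (a := -p) (by nlinarith [pow_le_one₀ (by norm_num : (0:ℝ) ≤ 1/2) (by norm_num : (1/2:ℝ) ≤ 1) (n := 2 + j), hp ▸ le_refl p] : (-2 : ℝ) ≤ -p) (k - 1)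
    rw [hcast] at this
    have e1 : 1 + ((k : ℝ) - 1) * (-p) = 1 - ((k : ℝ) - 1) * p := by ring
    have e2 : (1 : ℝ) + -p = 1 - p := by ring
    rw [e1, e2] at this
    exact this
  have hhalf : (1 : ℝ) / 2 < 1 - ((k : ℝ) - 1) * p := by nlinarith
  have hpos : (0 : ℝ) < (k : ℝ) * p := by positivity
  calc (1 : ℝ) / 8 ≤ ((k : ℝ) * p) * (1 / 2) := by nlinarith
  _ < ((k : ℝ) * p) * (1 - ((k : ℝ) - 1) * p) := by nlinarith
  _ ≤ (k : ℝ) * p * (1 - p) ^ (k - 1) := by nlinarith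
end

section
/- Let i be a natural number with i ≥ 2, let k be a natural number with 2^(i−2) ≤ k and k < 2^(i−1), and let p = 2^{−i} (so 0 < p ≤ 1). Then the probability that a binomial random variable with k trials and success probability p takes the value 1 is strictly greater than 1/8; that is, (PMF.binomial p _ k) 1 > 1/8. -/
/-!
`P(X = 1) = k p (1 - p)^(k - 1)`. The dyadic bounds on `k` give `1/4 ≤ k p` and
`(k - 1) p < 1/2`, so Bernoulli's inequality yields `(1 - p)^(k - 1) ≥ 1 - (k - 1) p > 1/2`,
and the product exceeds `1/4 · 1/2 = 1/8`.
-/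

open scoped ENNReal NNReal

lemma PMF.binomial_apply_one (p : ℝ≥0) (h : p ≤ 1) {n : ℕ} (hn : 1 ≤ n) :
    PMF.binomial p h n 1 = ENNReal.ofReal (n * p * (1 - p) ^ (n - 1)) := by
  convert (PMF.binomial_apply_of_le hn h).symm using 2
  · rfl
  · simp

lemma one_div_eight_lt_mul_mul_one_sub_pow {q : ℝ} {n : ℕ} (hq : q ≤ 1)
    (h_lo : 1 / 4 ≤ n * q) (h_hi : ((n - 1 : ℕ) : ℝ) * q < 1 / 2) :
    1 / 8 < n * q * (1 - q) ^ (n - 1) := by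
  have h_bernoulli : 1 / 2 < (1 - q) ^ (n - 1) := by
    have := one_add_mul_sub_le_pow (a := 1 - q) (by linarith) (n - 1)
    linarith
  have h_nonneg : 0 ≤ (1 - q) ^ (n - 1) := pow_nonneg (by linarith) _
  calc (1 / 8 : ℝ) = 1 / 4 * (1 / 2) := by norm_num
    _ < 1 / 4 * (1 - q) ^ (n - 1) := by gcongr
    _ ≤ n * q * (1 - q) ^ (n - 1) := by gcongr

lemma one_div_four_le_mul_inv_two_pow {i k : ℕ} (hk : 2 ^ (i - 2) ≤ k) :
    1 / 4 ≤ (k : ℝ) * 2⁻¹ ^ i := by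
  have : (2 : ℝ) ^ i ≤ 4 * k :=
    calc (2 : ℝ) ^ i ≤ 2 ^ (i - 2 + 2) := pow_le_pow_right₀ (by norm_num) (by omega)
      _ = 4 * 2 ^ (i - 2) := by ring
      _ ≤ 4 * k := by gcongr; exact_mod_cast hk
  rw [inv_pow, ← div_eq_mul_inv, le_div_iff₀ (by positivity)]
  linarith

lemma sub_one_mul_inv_two_pow_lt {i k : ℕ} (hi : 1 ≤ i) (hk : k < 2 ^ (i - 1)) :
    ((k - 1 : ℕ) : ℝ) * 2⁻¹ ^ i < 1 / 2 := by
  have hk' : ((k - 1 : ℕ) : ℝ) < 2 ^ (i - 1) := by exact_mod_cast (Nat.sub_le k 1).trans_lt hk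
  have h_pow : (2 : ℝ) ^ i = 2 * 2 ^ (i - 1) := by rw [← pow_succ']; congr 1; omega
  rw [inv_pow, ← div_eq_mul_inv, div_lt_iff₀ (by positivity)]
  linarith

theorem binomial_one_gt_eighth (i k : ℕ) (hi : 2 ≤ i)
    (hk1 : 2 ^ (i - 2) ≤ k) (hk2 : k < 2 ^ (i - 1))
    (p : ℝ≥0∞) (hp : p = 2⁻¹ ^ i) (hp1 : p ≤ 1) :
    (PMF.binomial p.toNNReal (by simpa using ENNReal.toNNReal_mono ENNReal.one_ne_top hp1) k) 1 > 1 / 8 := by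
  have hk : 1 ≤ k := Nat.one_le_two_pow.trans hk1
  have hp_le : p.toNNReal ≤ 1 := by
    simpa using ENNReal.toNNReal_mono ENNReal.one_ne_top hp1
  have hp_real : (p.toNNReal : ℝ) = 2⁻¹ ^ i := by simp [hp, ENNReal.toNNReal_ofNat]
  -- the proof of `p.toNNReal ≤ 1` elaborated in the statement blocks `rw`
  change PMF.binomial p.toNNReal hp_le k 1 > 1 / 8
  rw [PMF.binomial_apply_one _ _ hk, hp_real, gt_iff_lt,
    ← ENNReal.ofReal_toReal (a := 1 / 8) (by simp),
    ENNReal.ofReal_lt_ofReal_iff_of_nonneg ENNReal.toReal_nonneg]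
  have h_real := one_div_eight_lt_mul_mul_one_sub_pow (pow_le_one₀ (by norm_num) (by norm_num))
    (one_div_four_le_mul_inv_two_pow hk1) (sub_one_mul_inv_two_pow_lt (by omega) hk2)
  simpa using h_real
end
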